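/- Let V be a representation of o_5 and v ∈ V a vector with T v = 0 and X^{k+1} v = 0, where X = e_{12}−e_{45}, T = √2(e_{23}−e_{34}). Then for every scalar ξ, (X + ξZ − ξ²Y)^{k+1} v = 0, where Y = e_{14}−e_{25} and Z = √2(−e_{13}+e_{35}). -/

import Mathlib

open Matrix

/-- Matrix units e_{ab} for 5×5 complex matrices (0-based indices). -/
noncomputable def E5 (a b : Fin 5) : Matrix (Fin 5) (Fin 5) ℂ :=
  Matrix.single a b 1

/-- Membership in o_5: the condition c_{ab} + c_{6−b,6−a} = 0 (written with
0-based indices as c_{ab} + c_{4−b,4−a} = 0). -/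
def memO5 (c : Matrix (Fin 5) (Fin 5) ℂ) : Prop :=
  ∀ a b : Fin 5, c a b + c (4 - b) (4 - a) = 0

/-- X = e_{12} − e_{45}. -/
noncomputable def Xo5 : Matrix (Fin 5) (Fin 5) ℂ := E5 0 1 - E5 3 4
/-- X̄ = e_{21} − e_{54}. -/
noncomputable def Xbo5 : Matrix (Fin 5) (Fin 5) ℂ := E5 1 0 - E5 4 3
/-- Y = e_{14} − e_{25}. -/
noncomputable def Yo5 : Matrix (Fin 5) (Fin 5) ℂ := E5 0 3 - E5 1 4
/-- Ȳ = e_{41} − e_{52}. -/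
noncomputable def Ybo5 : Matrix (Fin 5) (Fin 5) ℂ := E5 3 0 - E5 4 1
/-- Z = √2(−e_{13} + e_{35}). -/
noncomputable def Zo5 : Matrix (Fin 5) (Fin 5) ℂ :=
  (Real.sqrt 2 : ℂ) • (-(E5 0 2) + E5 2 4)
/-- Z̄ = √2(−e_{31} + e_{53}). -/
noncomputable def Zbo5 : Matrix (Fin 5) (Fin 5) ℂ :=
  (Real.sqrt 2 : ℂ) • (-(E5 2 0) + E5 4 2)
/-- T = √2(e_{23} − e_{34}). -/
noncomputable def To5 : Matrix (Fin 5) (Fin 5) ℂ :=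
  (Real.sqrt 2 : ℂ) • (E5 1 2 - E5 2 3)
/-- T̄ = √2(e_{32} − e_{43}). -/
noncomputable def Tbo5 : Matrix (Fin 5) (Fin 5) ℂ :=
  (Real.sqrt 2 : ℂ) • (E5 2 1 - E5 3 2)

/-!
Put `M(ξ) = X + ξZ - ξ²Y`. The relations `[T,X] = Z`, `[T,Z] = -2Y`, `[T,Y] = 0` say exactly that
`dM/dξ = [T, M]`, and since `d/dξ` and `ad T` are both derivations, `d(Mⁿ)/dξ = [T, Mⁿ]`.
Applied to `v` with `Tv = 0`, the coefficients `Fⱼ` of the polynomial `ξ ↦ Mⁿv` satisfy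
`(j+1) Fⱼ₊₁ = T Fⱼ`, and `F₀ = Xⁿv = 0`, so all of them vanish. This is the infinitesimal form
of `exp(ξ ad T) X = X + ξZ - ξ²Y`.
-/

open Polynomial

namespace Polynomial

variable {A : Type*} [Ring A]

theorem derivative_pow_eq_lie {t : A} {p : A[X]} (hp : derivative p = ⁅C t, p⁆) (n : ℕ) :
    derivative (p ^ n) = ⁅C t, p ^ n⁆ := by
  induction n with
  | zero => simp [LieRing.of_associative_ring_bracket]
  | succ n ih =>
    rw [pow_succ, derivative_mul, ih, hp]
    simp only [LieRing.of_associative_ring_bracket]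
    noncomm_ring

theorem coeff_smul_eq_zero_of_derivative_eq_lie {V : Type*} [AddCommGroup V] [Module A V]
    [IsAddTorsionFree V] {t : A} {p : A[X]} {v : V} (hp : derivative p = ⁅C t, p⁆)
    (ht : t • v = 0) (h0 : p.coeff 0 • v = 0) (j : ℕ) : p.coeff j • v = 0 := by
  induction j with
  | zero => exact h0
  | succ j ih =>
    have hj := congr_arg (fun q => q.coeff j • v) hp
    simp only [coeff_derivative, LieRing.of_associative_ring_bracket, coeff_sub, coeff_C_mul,
      coeff_mul_C, sub_smul, mul_smul, ht, ih, smul_zero, sub_zero] at hj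
    rw [← Nat.cast_succ, Nat.cast_smul_eq_nsmul, smul_comm, smul_eq_zero] at hj
    exact hj.resolve_left j.succ_ne_zero

theorem lie_C_C_mul_X_pow (t a : A) (n : ℕ) : ⁅(C t : A[X]), C a * X ^ n⁆ = C ⁅t, a⁆ * X ^ n := by
  simp only [LieRing.of_associative_ring_bracket, C_sub, C_mul, sub_mul, mul_assoc, X_pow_mul_C]

variable {K : Type*} [CommRing K] [Algebra K A]

theorem eval_algebraMap_pow (p : A[X]) (ξ : K) (n : ℕ) :
    (p ^ n).eval (algebraMap K A ξ) = p.eval (algebraMap K A ξ) ^ n :=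
  map_pow (eval₂RingHom' (RingHom.id A) _ fun a => Algebra.commute_algebraMap_right ξ a) p n

theorem eval_algebraMap_smul_eq_zero {V : Type*} [AddCommGroup V] [Module A V] [Module K V]
    [IsScalarTower K A V] {p : A[X]} {v : V} (h : ∀ j, p.coeff j • v = 0) (ξ : K) :
    p.eval (algebraMap K A ξ) • v = 0 := by
  rw [eval_eq_sum_range, Finset.sum_smul]
  refine Finset.sum_eq_zero fun j _ => ?_
  rw [← map_pow, ← Algebra.commutes, ← Algebra.smul_def, smul_assoc, h, smul_zero]

theorem derivative_eq_lie_of_lie_eq {t x y z : A} (hx : ⁅t, x⁆ = z)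
    (hz : ⁅t, z⁆ = (-2 : K) • y) (hy : ⁅t, y⁆ = 0) :
    derivative (C x + C z * X - C y * X ^ 2) = ⁅C t, C x + C z * X - C y * X ^ 2⁆ := by
  have hsplit : ⁅C t, C x + C z * X - C y * X ^ 2⁆
      = ⁅C t, C x * X ^ 0⁆ + ⁅C t, C z * X ^ 1⁆ - ⁅C t, C y * X ^ 2⁆ := by
    simp only [LieRing.of_associative_ring_bracket, pow_zero, pow_one, mul_one]
    noncomm_ring
  rw [hsplit, lie_C_C_mul_X_pow, lie_C_C_mul_X_pow, lie_C_C_mul_X_pow, hx, hz, hy, ← smul_C,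
    Algebra.smul_def]
  simp only [derivative_sub, derivative_C, derivative_mul, zero_mul,
    derivative_X, mul_one, zero_add, derivative_X_pow_succ, Nat.cast_one, map_add, map_one,
    pow_one, pow_zero, map_neg, map_ofNat, neg_mul, map_zero, sub_zero]
  noncomm_ring

end Polynomial

theorem pow_add_smul_sub_sq_smul_smul_eq_zero {K A V : Type*} [CommRing K] [Ring A]
    [Algebra K A] [AddCommGroup V] [Module A V] [Module K V] [IsScalarTower K A V]
    [IsAddTorsionFree V] {t x y z : A} (hx : ⁅t, x⁆ = z) (hz : ⁅t, z⁆ = (-2 : K) • y)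
    (hy : ⁅t, y⁆ = 0) {n : ℕ} {v : V} (ht : t • v = 0) (hxv : x ^ n • v = 0) (ξ : K) :
    (x + ξ • z - ξ ^ 2 • y) ^ n • v = 0 := by
  set M : A[X] := C x + C z * X - C y * X ^ 2
  have hM_eval : M.eval (algebraMap K A ξ) = x + ξ • z - ξ ^ 2 • y := by
    simp [M, Algebra.smul_def, ← map_pow, Algebra.commutes]
  have hM0 : M.coeff 0 = x := by simp [M]
  have hcoeff := coeff_smul_eq_zero_of_derivative_eq_lie
    (derivative_pow_eq_lie (derivative_eq_lie_of_lie_eq hx hz hy) n) ht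
    (by rwa [← constantCoeff_apply, map_pow, constantCoeff_apply, hM0])
  rw [← hM_eval, ← eval_algebraMap_pow]
  exact eval_algebraMap_smul_eq_zero hcoeff ξ

theorem memO5_Xo5 : memO5 Xo5 := by
  intro a b
  fin_cases a <;> fin_cases b <;> simp [Xo5, E5, Matrix.single]

theorem memO5_Yo5 : memO5 Yo5 := by
  intro a b
  fin_cases a <;> fin_cases b <;> simp [Yo5, E5, Matrix.single]

theorem memO5_Zo5 : memO5 Zo5 := by
  intro a b
  fin_cases a <;> fin_cases b <;> simp [Zo5, E5, Matrix.single]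

theorem memO5_To5 : memO5 To5 := by
  intro a b
  fin_cases a <;> fin_cases b <;> simp [To5, E5, Matrix.single]

theorem lie_To5_Xo5 : ⁅To5, Xo5⁆ = Zo5 := by
  rw [LieRing.of_associative_ring_bracket]
  ext i j
  fin_cases i <;> fin_cases j <;> simp [To5, Xo5, Zo5, E5, Matrix.mul_apply, Matrix.single]

theorem lie_To5_Zo5 : ⁅To5, Zo5⁆ = (-2 : ℂ) • Yo5 := by
  rw [LieRing.of_associative_ring_bracket]
  ext i j
  fin_cases i <;> fin_cases j <;>
    simp [To5, Zo5, Yo5, E5, Matrix.mul_apply, Matrix.single, ← Complex.ofReal_mul]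

theorem lie_To5_Yo5 : ⁅To5, Yo5⁆ = 0 := by
  rw [LieRing.of_associative_ring_bracket]
  ext i j
  fin_cases i <;> fin_cases j <;> simp [To5, Yo5, E5, Matrix.mul_apply, Matrix.single]

/-- for a representation ρ of o_5 and a vector v with Tv = 0 and
X^{k+1}v = 0, one has (X + ξZ − ξ²Y)^{k+1} v = 0 for every scalar ξ. -/
theorem conjugated_nilpotency {V : Type*} [AddCommGroup V] [Module ℂ V]
    (ρ : Matrix (Fin 5) (Fin 5) ℂ →ₗ[ℂ] Module.End ℂ V)
    (hρ : ∀ c d : Matrix (Fin 5) (Fin 5) ℂ, memO5 c → memO5 d →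
      ρ ⁅c, d⁆ = ⁅ρ c, ρ d⁆)
    (k : ℕ) (v : V)
    (hT : ρ To5 v = 0) (hX : ((ρ Xo5) ^ (k + 1)) v = 0) :
    ∀ ξ : ℂ, ((ρ Xo5 + ξ • ρ Zo5 - ξ ^ 2 • ρ Yo5) ^ (k + 1)) v = 0 := by
  have : IsAddTorsionFree V := .of_isTorsionFree ℂ V
  have hx : ⁅ρ To5, ρ Xo5⁆ = ρ Zo5 := by rw [← hρ _ _ memO5_To5 memO5_Xo5, lie_To5_Xo5]
  have hz : ⁅ρ To5, ρ Zo5⁆ = (-2 : ℂ) • ρ Yo5 := by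
    rw [← hρ _ _ memO5_To5 memO5_Zo5, lie_To5_Zo5, map_smul]
  have hy : ⁅ρ To5, ρ Yo5⁆ = 0 := by rw [← hρ _ _ memO5_To5 memO5_Yo5, lie_To5_Yo5, map_zero]
  exact pow_add_smul_sub_sq_smul_smul_eq_zero hx hz hy hT hX
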